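/- arXiv:1709.01958 — 2 statements merged into one kernel-verified Lean document; each statement's English description precedes it below -/
import Mathlib

section
/- A weighted family of rank-one projections {(w_j, π_j)}_{j=1}^n with ∑_j w_j = 1 satisfies ∑_j w_j π_j ⊗ π_j = (2/(d(d+1))) Π_sym if and only if ∑_{j,l} w_j w_l |Tr[π_j π_l]|² = 2/(d(d+1)) and ∑_j w_j π_j = I/d. -/
/-! Write `A = ∑ⱼ wⱼ πⱼ ⊗ πⱼ` and `c = 2 / (d (d + 1))`. Each `πⱼ` is idempotent of trace one
and `tr ((X ⊗ Y) F) = tr (X Y)` for the swap `F`, so `tr (A Π_sym) = 1`, while `tr (A²)` is the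
frame potential `∑ wⱼ wₗ |tr (πⱼ πₗ)|²`. If `A = c Π_sym`, the frame potential is
`c tr (A Π_sym) = c`, and taking the partial trace over the second factor gives
`∑ wⱼ πⱼ = c (d + 1) / 2 • I = I / d`. Conversely, if the frame potential is `c`, then
`‖A - c Π_sym‖²_HS = tr (A²) - 2 c tr (A Π_sym) + c² tr Π_sym = c - 2 c + c = 0`. -/

open Matrix BigOperators Kronecker

/-- The swap operator on ℂ^d ⊗ ℂ^d as a matrix. -/
def swapMatrix (d : ℕ) : Matrix (Fin d × Fin d) (Fin d × Fin d) ℂ :=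
  fun p q => if p.1 = q.2 ∧ p.2 = q.1 then 1 else 0

/-- The projection onto the symmetric subspace of ℂ^d ⊗ ℂ^d. -/
noncomputable def symProjection (d : ℕ) : Matrix (Fin d × Fin d) (Fin d × Fin d) ℂ :=
  (2 : ℂ)⁻¹ • (1 + swapMatrix d)

namespace Matrix

theorem trace_eq_rank_of_isIdempotentElem {K m : Type*} [Field K] [Fintype m] [DecidableEq m]
    {A : Matrix m m K} (hA : IsIdempotentElem A) : A.trace = A.rank := by
  have hA' : IsIdempotentElem A.toLin' := by
    rw [IsIdempotentElem, Module.End.mul_eq_comp, ← toLin'_mul, hA.eq]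
  rw [← trace_toLin'_eq, ((LinearMap.isProj_range_iff_isIdempotentElem _).2 hA').trace, rank,
    toLin'_apply']

open scoped ComplexOrder in
theorem IsHermitian.eq_of_trace_mul_eq {m : Type*} [Fintype m]
    {X Y : Matrix m m ℂ} (hX : X.IsHermitian) (hY : Y.IsHermitian)
    (hXX : (X * X).trace = (X * Y).trace) (hYY : (Y * Y).trace = (X * Y).trace) : X = Y := by
  have hXY : (X - Y).IsHermitian := hX.sub hY
  rw [← sub_eq_zero, ← trace_conjTranspose_mul_self_eq_zero_iff, hXY.eq, sub_mul, mul_sub,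
    mul_sub, trace_sub, trace_sub, trace_sub, hXX, hYY, trace_mul_comm Y X]
  ring

theorem IsHermitian.coe_norm_trace_mul_sq {m : Type*} [Fintype m]
    {X Y : Matrix m m ℂ} (hX : X.IsHermitian) (hY : Y.IsHermitian) :
    (‖(X * Y).trace‖ : ℂ) ^ 2 = (X * Y).trace ^ 2 := by
  have hreal : star (X * Y).trace = (X * Y).trace := by
    rw [← trace_conjTranspose, conjTranspose_mul, hX.eq, hY.eq, trace_mul_comm]
  obtain ⟨r, hr⟩ := Complex.conj_eq_iff_real.1 hreal
  rw [hr, Complex.norm_real, Real.norm_eq_abs, ← Complex.ofReal_pow, sq_abs, Complex.ofReal_pow]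

section PartialTrace

variable {R ι κ : Type*} [CommSemiring R] [Fintype κ]

def partialTraceRight : Matrix (ι × κ) (ι × κ) R →ₗ[R] Matrix ι ι R where
  toFun M i k := ∑ b, M (i, b) (k, b)
  map_add' M N := by funext i k; exact Finset.sum_add_distrib
  map_smul' c M := by funext i k; exact (Finset.mul_sum ..).symm

@[simp]
theorem partialTraceRight_apply (M : Matrix (ι × κ) (ι × κ) R) (i k : ι) :
    partialTraceRight M i k = ∑ b, M (i, b) (k, b) := rfl

theorem partialTraceRight_kronecker (M : Matrix ι ι R) (N : Matrix κ κ R) :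
    partialTraceRight (M ⊗ₖ N) = N.trace • M := by
  ext; simp [trace, ← Finset.mul_sum, mul_comm]

theorem partialTraceRight_one [DecidableEq ι] [DecidableEq κ] :
    partialTraceRight (1 : Matrix (ι × κ) (ι × κ) R) = (Fintype.card κ : R) • 1 := by
  ext i k; by_cases h : i = k <;> simp [h]

end PartialTrace

end Matrix

section SwapAndSymmetric

variable {d : ℕ}

theorem swapMatrix_conjTranspose : (swapMatrix d)ᴴ = swapMatrix d := by
  ext ⟨a, b⟩ ⟨c, e⟩
  simp only [conjTranspose_apply, swapMatrix, apply_ite, star_one, star_zero]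
  grind

theorem swapMatrix_mul_self : swapMatrix d * swapMatrix d = 1 := by
  ext ⟨a, b⟩ ⟨c, e⟩
  simp [mul_apply, swapMatrix, Fintype.sum_prod_type, ite_and, one_apply, Prod.ext_iff, eq_comm,
    and_comm]

theorem trace_kronecker_mul_swapMatrix (X Y : Matrix (Fin d) (Fin d) ℂ) :
    ((X ⊗ₖ Y) * swapMatrix d).trace = (X * Y).trace := by
  simp only [trace, diag, mul_apply, swapMatrix, kroneckerMap_apply,
    Fintype.sum_prod_type, ite_and, mul_ite, mul_one, mul_zero]
  rw [Finset.sum_comm]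
  simp only [Finset.sum_ite_irrel, Finset.sum_ite_eq', Finset.mem_univ, if_true,
    Finset.sum_const_zero]
  exact Finset.sum_comm

theorem trace_swapMatrix : (swapMatrix d).trace = d := by
  simpa using trace_kronecker_mul_swapMatrix (1 : Matrix (Fin d) (Fin d) ℂ) 1

theorem partialTraceRight_swapMatrix : partialTraceRight (swapMatrix d) = 1 := by
  ext i k
  by_cases h : i = k <;> simp [swapMatrix, one_apply, h, ite_and]

theorem symProjection_isHermitian : (symProjection d).IsHermitian := by
  simp [symProjection, IsHermitian, conjTranspose_smul, swapMatrix_conjTranspose]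

theorem symProjection_mul_self : symProjection d * symProjection d = symProjection d := by
  simp only [symProjection, smul_mul_smul_comm, add_mul, mul_add, one_mul, mul_one,
    swapMatrix_mul_self]
  module

theorem trace_symProjection : (symProjection d).trace = d * (d + 1) / 2 := by
  simp [symProjection, trace_swapMatrix]
  ring

theorem partialTraceRight_symProjection :
    partialTraceRight (symProjection d) = (((d : ℂ) + 1) / 2) • 1 := by
  simp [symProjection, partialTraceRight_one, partialTraceRight_swapMatrix, smul_smul]
  module

theorem trace_kronecker_mul_symProjection (X Y : Matrix (Fin d) (Fin d) ℂ) :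
    ((X ⊗ₖ Y) * symProjection d).trace = (X.trace * Y.trace + (X * Y).trace) / 2 := by
  simp [symProjection, mul_add, trace_kronecker_mul_swapMatrix, trace_kronecker]
  ring

theorem isHermitian_smul_symProjection :
    ((2 / ((d : ℂ) * (d + 1))) • symProjection d).IsHermitian := by
  simp [IsHermitian, conjTranspose_smul, symProjection_isHermitian.eq]

theorem trace_smul_symProjection_mul_self (hd : d ≠ 0) :
    ((2 / ((d : ℂ) * (d + 1))) • symProjection d *
        (2 / ((d : ℂ) * (d + 1))) • symProjection d).trace = 2 / ((d : ℂ) * (d + 1)) := by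
  have hd' : (d : ℂ) ≠ 0 := Nat.cast_ne_zero.2 hd
  rw [smul_mul_smul_comm, symProjection_mul_self, trace_smul, trace_symProjection, smul_eq_mul]
  field_simp

theorem partialTraceRight_smul_symProjection (hd : d ≠ 0) :
    partialTraceRight ((2 / ((d : ℂ) * (d + 1))) • symProjection d) = (d : ℂ)⁻¹ • 1 := by
  have hd' : (d : ℂ) ≠ 0 := Nat.cast_ne_zero.2 hd
  rw [map_smul, partialTraceRight_symProjection, smul_smul]
  congr 1
  field_simp

end SwapAndSymmetric

section WeightedFamily

variable {ι m : Type*} [Fintype ι]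

theorem trace_sum_smul_kronecker_mul_self [Fintype m] {R : Type*} [CommSemiring R] (w : ι → R)
    (π : ι → Matrix m m R) :
    ((∑ j, w j • (π j ⊗ₖ π j)) * ∑ j, w j • (π j ⊗ₖ π j)).trace
      = ∑ j, ∑ l, w j * w l * (π j * π l).trace ^ 2 := by
  simp only [Finset.sum_mul_sum, trace_sum, smul_mul_smul_comm, ← mul_kronecker_mul, trace_smul,
    trace_kronecker, smul_eq_mul, sq]

theorem partialTraceRight_sum_smul_kronecker [Fintype m] {R : Type*} [CommSemiring R] (w : ι → R)
    (π : ι → Matrix m m R) (htr : ∀ j, (π j).trace = 1) :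
    partialTraceRight (∑ j, w j • (π j ⊗ₖ π j)) = ∑ j, w j • π j := by
  simp [partialTraceRight_kronecker, htr]

theorem isHermitian_sum_smul_kronecker (w : ι → ℝ) (π : ι → Matrix m m ℂ)
    (hπ : ∀ j, (π j).IsHermitian) : (∑ j, (w j : ℂ) • (π j ⊗ₖ π j)).IsHermitian := by
  simp [IsHermitian, conjTranspose_sum, conjTranspose_smul, conjTranspose_kronecker, (hπ _).eq]

theorem trace_sum_smul_kronecker_mul_symProjection {d : ℕ} (w : ι → ℂ)
    (π : ι → Matrix (Fin d) (Fin d) ℂ) (hw : ∑ j, w j = 1) (hidem : ∀ j, π j * π j = π j)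
    (htr : ∀ j, (π j).trace = 1) :
    ((∑ j, w j • (π j ⊗ₖ π j)) * symProjection d).trace = 1 := by
  simp [Finset.sum_mul, trace_sum, trace_kronecker_mul_symProjection, hidem, htr, hw]

theorem ofReal_frame_potential [Fintype m] (w : ι → ℝ) (π : ι → Matrix m m ℂ)
    (hπ : ∀ j, (π j).IsHermitian) :
    ((∑ j, ∑ l, w j * w l * ‖(π j * π l).trace‖ ^ 2 : ℝ) : ℂ)
      = ((∑ j, (w j : ℂ) • (π j ⊗ₖ π j)) * ∑ j, (w j : ℂ) • (π j ⊗ₖ π j)).trace := by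
  rw [trace_sum_smul_kronecker_mul_self]
  push_cast
  simp only [(hπ _).coe_norm_trace_mul_sq (hπ _)]

end WeightedFamily

theorem weighted_two_design_iff_general
    (d n : ℕ) (hd : 0 < d) (w : Fin n → ℝ)
    (hsum : ∑ j, w j = 1) (π : Fin n → Matrix (Fin d) (Fin d) ℂ)
    (hproj : ∀ j, (π j).IsHermitian ∧ π j * π j = π j ∧ (π j).rank = 1) :
    (∑ j, (w j : ℂ) • (π j ⊗ₖ π j) = (2 / ((d : ℂ) * (d + 1))) • symProjection d)
      ↔ ((∑ j, ∑ l, w j * w l * ‖(π j * π l).trace‖ ^ 2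
            = 2 / ((d : ℝ) * (d + 1))) ∧
         ∑ j, (w j : ℂ) • π j = ((d : ℂ))⁻¹ • (1 : Matrix (Fin d) (Fin d) ℂ)) := by
  have htr : ∀ j, (π j).trace = 1 := fun j => by
    rw [trace_eq_rank_of_isIdempotentElem (hproj j).2.1, (hproj j).2.2, Nat.cast_one]
  set A := ∑ j, (w j : ℂ) • (π j ⊗ₖ π j)
  set c : ℂ := 2 / ((d : ℂ) * (d + 1))
  have hAcP : (A * (c • symProjection d)).trace = c := by
    rw [mul_smul_comm, trace_smul, trace_sum_smul_kronecker_mul_symProjection _ _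
      (by exact_mod_cast hsum) (fun j => (hproj j).2.1) htr, smul_eq_mul, mul_one]
  have hc : ((2 / ((d : ℝ) * (d + 1)) : ℝ) : ℂ) = c := by push_cast; rfl
  rw [← Complex.ofReal_inj, ofReal_frame_potential w π fun j => (hproj j).1, hc]
  constructor
  · intro h
    exact ⟨(congrArg (fun B => (A * B).trace) h).trans hAcP,
      (partialTraceRight_sum_smul_kronecker _ _ htr).symm.trans
        ((congrArg partialTraceRight h).trans (partialTraceRight_smul_symProjection hd.ne'))⟩
  · rintro ⟨h, -⟩
    exact (isHermitian_sum_smul_kronecker w π fun j => (hproj j).1).eq_of_trace_mul_eq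
      isHermitian_smul_symProjection (h.trans hAcP.symm)
      ((trace_smul_symProjection_mul_self hd.ne').trans hAcP.symm)

/-- Characterization of weighted rank-one 2-designs: the tensor-average condition
is equivalent to the fourth-moment condition together with the 1-design condition. -/
theorem weighted_two_design_iff
    (d n : ℕ) (hd : 0 < d) (w : Fin n → ℝ) (hw : ∀ j, 0 < w j)
    (hsum : ∑ j, w j = 1) (π : Fin n → Matrix (Fin d) (Fin d) ℂ)
    (hproj : ∀ j, (π j).IsHermitian ∧ π j * π j = π j ∧ (π j).rank = 1) :
    (∑ j, (w j : ℂ) • (π j ⊗ₖ π j) = (2 / ((d : ℂ) * (d + 1))) • symProjection d)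
      ↔ ((∑ j, ∑ l, w j * w l * ‖(π j * π l).trace‖ ^ 2
            = 2 / ((d : ℝ) * (d + 1))) ∧
         ∑ j, (w j : ℂ) • π j = ((d : ℂ))⁻¹ • (1 : Matrix (Fin d) (Fin d) ℂ)) :=
  weighted_two_design_iff_general d n hd w hsum π hproj
end

section
/- If {B_i}_{i=1}^{d+1} is a maximal family of d+1 pairwise mutually unbiased bases in ℂ^d, then the d(d+1) vectors, equally weighted with w = 1/(d(d+1)), satisfy ∑_{j,l} w² |⟨f_j, f_l⟩|⁴ = 2/(d(d+1)), i.e., they form a weighted complex projective 2-design by the fourth-moment criterion. -/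
/-!
Within one basis the overlaps are `δ_ab`, across two bases their squared moduli are `1/d`, so
every row of the Gram matrix of fourth powers sums to `1 + (m - 1) d · (1/d)² = 1 + (m - 1)/d`
for `m` bases. For a maximal family `m = d + 1` each row sums to `2`, and averaging the
`d(d+1)` rows with weight `(d(d+1))⁻²` gives `2/(d(d+1))`.
-/

open Matrix

structure IsMutuallyUnbiasedFamily {ι : Type*} {d : ℕ} (B : ι → Fin d → Fin d → ℂ) : Prop where
  orthonormal : ∀ i a b, star (B i a) ⬝ᵥ B i b = if a = b then 1 else 0
  unbiased : ∀ i i', i ≠ i' → ∀ a b, ‖star (B i a) ⬝ᵥ B i' b‖ ^ 2 = 1 / (d : ℝ)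

namespace IsMutuallyUnbiasedFamily

variable {ι : Type*} [DecidableEq ι] {d : ℕ} {B : ι → Fin d → Fin d → ℂ}

theorem norm_dotProduct_pow_four (hB : IsMutuallyUnbiasedFamily B) (i i' : ι) (a b : Fin d) :
    ‖star (B i a) ⬝ᵥ B i' b‖ ^ 4 =
      if i = i' then (if a = b then 1 else 0) else 1 / (d : ℝ) ^ 2 := by
  by_cases hi : i = i'
  · subst hi
    by_cases hab : a = b <;> simp [hB.orthonormal, hab]
  · rw [if_neg hi, show (4 : ℕ) = 2 * 2 from rfl, pow_mul, hB.unbiased i i' hi, div_pow, one_pow]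

theorem sum_norm_dotProduct_pow_four_basis (hB : IsMutuallyUnbiasedFamily B) (i i' : ι)
    (a : Fin d) : ∑ b, ‖star (B i a) ⬝ᵥ B i' b‖ ^ 4 = if i = i' then 1 else 1 / (d : ℝ) := by
  have hd : (d : ℝ) ≠ 0 := Nat.cast_ne_zero.mpr (Fin.pos a).ne'
  simp_rw [hB.norm_dotProduct_pow_four]
  split_ifs
  · simp
  · simp only [Finset.sum_const, Finset.card_univ, Fintype.card_fin, nsmul_eq_mul]
    field_simp

theorem sum_norm_dotProduct_pow_four [Fintype ι] (hB : IsMutuallyUnbiasedFamily B) (i : ι)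
    (a : Fin d) :
    ∑ q : ι × Fin d, ‖star (B i a) ⬝ᵥ B q.1 q.2‖ ^ 4 = 1 + ((Fintype.card ι : ℝ) - 1) / d := by
  rw [Fintype.sum_prod_type, Fintype.sum_eq_add_sum_compl i]
  simp_rw [hB.sum_norm_dotProduct_pow_four_basis]
  rw [if_true, Finset.sum_ite_of_false fun i' hi' => by simpa [eq_comm] using hi',
    Finset.sum_const, Finset.card_compl, Finset.card_singleton, nsmul_eq_mul,
    Nat.cast_sub (Fintype.card_pos_iff.mpr ⟨i⟩)]
  ring

end IsMutuallyUnbiasedFamily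

theorem max_mubs_fourth_moment_general
    (d : ℕ) (B : Fin (d + 1) → Fin d → Fin d → ℂ)
    (horth : ∀ i a b, star (B i a) ⬝ᵥ B i b = if a = b then 1 else 0)
    (hmub : ∀ i i', i ≠ i' → ∀ a b,
      ‖star (B i a) ⬝ᵥ B i' b‖ ^ 2 = 1 / (d : ℝ)) :
    ∑ p : Fin (d + 1) × Fin d, ∑ q : Fin (d + 1) × Fin d,
        ((d : ℝ) * (d + 1))⁻¹ * ((d : ℝ) * (d + 1))⁻¹ *
          ‖star (B p.1 p.2) ⬝ᵥ B q.1 q.2‖ ^ 4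
      = 2 / ((d : ℝ) * (d + 1)) := by
  have hB : IsMutuallyUnbiasedFamily B := ⟨horth, hmub⟩
  have hrow (p : Fin (d + 1) × Fin d) :
      ∑ q : Fin (d + 1) × Fin d, ‖star (B p.1 p.2) ⬝ᵥ B q.1 q.2‖ ^ 4 = 2 := by
    have hd : (d : ℝ) ≠ 0 := Nat.cast_ne_zero.mpr (Fin.pos p.2).ne'
    rw [hB.sum_norm_dotProduct_pow_four, Fintype.card_fin, Nat.cast_succ, add_sub_cancel_right,
      div_self hd, one_add_one_eq_two]
  simp_rw [← Finset.mul_sum, hrow, Finset.sum_const, Finset.card_univ, Fintype.card_prod,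
    Fintype.card_fin, nsmul_eq_mul]
  obtain rfl | hd := Nat.eq_zero_or_pos d
  · simp
  push_cast
  field_simp

/-- A maximal family of d+1 mutually unbiased bases, equally weighted, satisfies
the fourth-moment 2-design criterion. -/
theorem max_mubs_fourth_moment
    (d : ℕ) (hd : 0 < d) (B : Fin (d + 1) → Fin d → Fin d → ℂ)
    (horth : ∀ i a b, star (B i a) ⬝ᵥ B i b = if a = b then 1 else 0)
    (hmub : ∀ i i', i ≠ i' → ∀ a b,
      ‖star (B i a) ⬝ᵥ B i' b‖ ^ 2 = 1 / (d : ℝ)) :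
    ∑ p : Fin (d + 1) × Fin d, ∑ q : Fin (d + 1) × Fin d,
        ((d : ℝ) * (d + 1))⁻¹ * ((d : ℝ) * (d + 1))⁻¹ *
          ‖star (B p.1 p.2) ⬝ᵥ B q.1 q.2‖ ^ 4
      = 2 / ((d : ℝ) * (d + 1)) :=
  max_mubs_fourth_moment_general d B horth hmub
end
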